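/- arXiv:2305.19215 — 3 statements merged into one kernel-verified Lean document; each statement's English description precedes it below -/
import Mathlib

section
/- Fix γ > 0 and a real number w ≠ 0. Then the quadratic inequality δ²·(1 + γ·w²) − 2·γ·w·δ + γ·w² > 0 holds for every δ ∈ ℝ if and only if γ·w² > γ − 1 (equivalently, w² > 1 − 1/γ). Consequently, in the two-node model the expected least squares loss is uniquely minimized by the true DAG exactly when the system is strictly varsortable. -/
/-!
Multiplying by the leading coefficient `a = 1 + γw²` and completing the square,
`a · q(δ) = (aδ − γw)² − discrim / 4`, so `q` is positive everywhere exactly when its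
discriminant `−4γw²(1 + γw² − γ)` is negative, i.e. when `1 + γw² − γ > 0`.
-/

section Discriminant

variable {K : Type*} [Field K] [LinearOrder K] [IsStrictOrderedRing K] {a b c : K}

theorem quadratic_pos_of_discrim_neg (ha : 0 < a) (h : discrim a b c < 0) (x : K) :
    0 < a * (x * x) + b * x + c := by
  have hsq : 4 * a * (a * (x * x) + b * x + c) = (2 * a * x + b) ^ 2 - discrim a b c := by
    unfold discrim; ring
  have : 0 < 4 * a * (a * (x * x) + b * x + c) := by
    rw [hsq]; linarith [sq_nonneg (2 * a * x + b)]
  exact pos_of_mul_pos_right this (by positivity)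

theorem quadratic_pos_iff_discrim_neg (ha : 0 < a) :
    (∀ x : K, 0 < a * (x * x) + b * x + c) ↔ discrim a b c < 0 :=
  ⟨discrim_lt_zero ha.ne', quadratic_pos_of_discrim_neg ha⟩

end Discriminant

/-- The quadratic `δ²·(1 + γw²) − 2γwδ + γw²` is strictly positive for every `δ`
iff `γ·w² > γ − 1` (strict varsortability), for `γ > 0` and `w ≠ 0`. -/
theorem quadratic_positive_iff_strictly_varsortable
    (γ w : ℝ) (hγ : 0 < γ) (hw : w ≠ 0) :
    (∀ δ : ℝ, δ ^ 2 * (1 + γ * w ^ 2) - 2 * γ * w * δ + γ * w ^ 2 > 0) ↔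
      γ * w ^ 2 > γ - 1 := by
  have hq (δ : ℝ) : δ ^ 2 * (1 + γ * w ^ 2) - 2 * γ * w * δ + γ * w ^ 2 =
      (1 + γ * w ^ 2) * (δ * δ) + (-2 * γ * w) * δ + γ * w ^ 2 := by ring
  have hdiscrim : discrim (1 + γ * w ^ 2) (-2 * γ * w) (γ * w ^ 2) =
      -(4 * (γ * w ^ 2) * (1 + γ * w ^ 2 - γ)) := by
    unfold discrim; ring
  simp only [gt_iff_lt, hq]
  rw [quadratic_pos_iff_discrim_neg (by positivity), hdiscrim, neg_lt_zero,
    mul_pos_iff_of_pos_left (by positivity), sub_pos, sub_lt_iff_lt_add']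
end

section
/- For every γ > 0 and all real numbers w and δ, the quadratic form w²·(δ² + γ) − 2·δ·w + δ²/γ is nonnegative; moreover it is strictly positive whenever δ ≠ 0. Consequently, in the observational two-node system, the expected inverse-variance-weighted (dotears) loss of the misdirected model X₂ → X₁ with weight δ is at least that of the true model X₁ → X₂ with weight w, for all w, δ, and γ. -/
/-! Completing the square in `w` writes the quadratic form as `(wδ)² + γ (w − δ/γ)²`, a sum of
two nonnegative terms when `γ > 0`. For `δ ≠ 0` the first term is positive unless `w = 0`, and at
`w = 0` the form reduces to `δ²/γ > 0`. -/

namespace DotearsTwoNode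

/-- Excess expected dotears loss of the reversed model over the true one, divided by `α²`. -/
noncomputable def lossGap (γ w δ : ℝ) : ℝ :=
  w ^ 2 * (δ ^ 2 + γ) - 2 * δ * w + δ ^ 2 / γ

variable {γ : ℝ}

theorem lossGap_eq_sq_add_sq (hγ : γ ≠ 0) (w δ : ℝ) :
    lossGap γ w δ = (w * δ) ^ 2 + γ * (w - δ / γ) ^ 2 := by
  unfold lossGap
  field_simp
  ring

theorem lossGap_nonneg (hγ : 0 < γ) (w δ : ℝ) : 0 ≤ lossGap γ w δ := by
  rw [lossGap_eq_sq_add_sq hγ.ne']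
  positivity

theorem lossGap_zero_left (γ δ : ℝ) : lossGap γ 0 δ = δ ^ 2 / γ := by
  simp [lossGap]

theorem lossGap_pos (hγ : 0 < γ) {w δ : ℝ} (hδ : δ ≠ 0) : 0 < lossGap γ w δ := by
  rcases eq_or_ne w 0 with rfl | hw
  · rw [lossGap_zero_left]
    positivity
  · rw [lossGap_eq_sq_add_sq hγ.ne']
    have hwδ : 0 < (w * δ) ^ 2 := by positivity
    have hsq : 0 ≤ γ * (w - δ / γ) ^ 2 := by positivity
    linarith

end DotearsTwoNode

/-- For every `γ > 0` and all real `w, δ`, the quadratic form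
`w²·(δ² + γ) − 2δw + δ²/γ` is nonnegative, and strictly positive whenever `δ ≠ 0`.
(This quantity is, up to the positive factor `α²`, the excess expected dotears loss of
the misdirected two-node model over the true model.) -/
theorem dotears_observational_two_node_loss_gap_nonneg
    (γ : ℝ) (hγ : 0 < γ) :
    ∀ w δ : ℝ,
      0 ≤ w ^ 2 * (δ ^ 2 + γ) - 2 * δ * w + δ ^ 2 / γ ∧
      (δ ≠ 0 → 0 < w ^ 2 * (δ ^ 2 + γ) - 2 * δ * w + δ ^ 2 / γ) :=
  fun w δ =>
    ⟨DotearsTwoNode.lossGap_nonneg hγ w δ, fun hδ => DotearsTwoNode.lossGap_pos hγ hδ⟩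
end

section
/- Let p ≥ 1, let (Ω, 𝓕, μ) be a probability space, and let X : Ω → ℝ^p be a random vector with square-integrable components. Let 𝒟 denote the set of real p × p matrices W for which there exists a permutation π of {1,…,p} such that W_{π(i) π(j)} = 0 whenever i ≥ j (i.e., W is permutation-similar to a strictly upper triangular matrix). Suppose W₀ ∈ 𝒟 and the residuals ε_j := X_j − Σ_i X_i·(W₀)_{ij} (j = 1,…,p) are jointly independent, mean-zero, and have variances (Ω₀)_j > 0. For positive weights Ω : {1,…,p} → ℝ define the population score s_Ω(W) := Σ_j (1/Ω(j))·E[(X_j − Σ_i X_i·W_{ij})²], and define the gap ξ := inf over W ∈ 𝒟 with W ≠ W₀ of (s_{Ω₀}(W) − s_{Ω₀}(W₀)). Let Ω₁ : {1,…,p} → ℝ be any positive weights, a_max := max_j (Ω₀)_j/Ω₁(j), a_min := min_j (Ω₀)_j/Ω₁(j). If a_max/a_min ≤ 1 + ξ/p, then s_{Ω₁}(W₀) ≤ s_{Ω₁}(W) for every W ∈ 𝒟; and if a_max/a_min < 1 + ξ/p, then s_{Ω₁}(W₀) < s_{Ω₁}(W) for every W ∈ 𝒟 with W ≠ W₀.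 -/
open MeasureTheory ProbabilityTheory

/-- Misspecified-weights score minimization (Loh–Bühlmann / dotears Theorem):
if the ratio `a_max/a_min` of extreme weight ratios is at most `1 + ξ/p`, then the true
adjacency matrix `W₀` minimizes the population score under the weights `Ω₁` over all
DAG-supported matrices; if the inequality is strict, it is the unique minimizer. -/
theorem true_dag_minimizes_misspecified_score
    {Ω : Type*} [MeasureSpace Ω] [IsProbabilityMeasure (ℙ : Measure Ω)]
    {p : ℕ} (hp : 1 ≤ p)
    (X : Fin p → Ω → ℝ) (hmeas : ∀ j, Measurable (X j)) (hL : ∀ j, MemLp (X j) 2 ℙ)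
    (W₀ : Matrix (Fin p) (Fin p) ℝ)
    (Dset : Set (Matrix (Fin p) (Fin p) ℝ))
    (hDset : Dset =
      {W | ∃ π : Equiv.Perm (Fin p), ∀ i j : Fin p, j ≤ i → W (π i) (π j) = 0})
    (hW₀ : W₀ ∈ Dset)
    (Ω₀ : Fin p → ℝ) (hΩ₀pos : ∀ j, 0 < Ω₀ j)
    (hindep : iIndepFun
      (fun j ω => X j ω - ∑ i, X i ω * W₀ i j) ℙ)
    (hmean : ∀ j, ∫ ω, (X j ω - ∑ i, X i ω * W₀ i j) = 0)
    (hvar : ∀ j, variance (fun ω => X j ω - ∑ i, X i ω * W₀ i j) ℙ = Ω₀ j)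
    (s : (Fin p → ℝ) → Matrix (Fin p) (Fin p) ℝ → ℝ)
    (hs : ∀ Om W, s Om W = ∑ j, (1 / Om j) * ∫ ω, (X j ω - ∑ i, X i ω * W i j) ^ 2)
    (ξ : ℝ)
    (hξ : ξ = sInf ((fun W => s Ω₀ W - s Ω₀ W₀) '' {W | W ∈ Dset ∧ W ≠ W₀}))
    (Ω₁ : Fin p → ℝ) (hΩ₁pos : ∀ j, 0 < Ω₁ j)
    (amax amin : ℝ)
    (hamax : amax = ⨆ j, Ω₀ j / Ω₁ j) (hamin : amin = ⨅ j, Ω₀ j / Ω₁ j) :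
    (amax / amin ≤ 1 + ξ / p → ∀ W ∈ Dset, s Ω₁ W₀ ≤ s Ω₁ W) ∧
    (amax / amin < 1 + ξ / p → ∀ W ∈ Dset, W ≠ W₀ → s Ω₁ W₀ < s Ω₁ W) := by
  classical
  have hpR : (0:ℝ) < p := by exact_mod_cast hp
  haveI : Nonempty (Fin p) := ⟨⟨0, hp⟩⟩
  set a : Fin p → ℝ := fun j => Ω₀ j / Ω₁ j with ha
  have hapos : ∀ j, 0 < a j := fun j => div_pos (hΩ₀pos j) (hΩ₁pos j)
  have hale : ∀ j, a j ≤ amax := by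
    intro j; rw [hamax]; exact le_ciSup (Finite.bddAbove_range _) j
  have hlea : ∀ j, amin ≤ a j := by
    intro j; rw [hamin]; exact ciInf_le (Finite.bddBelow_range _) j
  have haminpos : 0 < amin := by
    obtain ⟨j0, hj0⟩ := Finite.exists_min a
    have : a j0 ≤ amin := by rw [hamin]; exact le_ciInf hj0
    exact lt_of_lt_of_le (hapos j0) this
  have haminmax : amin ≤ amax := le_trans (hlea ⟨0, hp⟩) (hale ⟨0, hp⟩)
  set e : Matrix (Fin p) (Fin p) ℝ → Fin p → ℝ :=
    fun W j => ∫ ω, (X j ω - ∑ i, X i ω * W i j) ^ 2 with he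
  have he0 : ∀ W j, 0 ≤ e W j := fun W j => integral_nonneg fun ω => sq_nonneg _
  have heW₀ : ∀ j, e W₀ j = Ω₀ j := by
    intro j
    have hmem : MemLp (fun ω => X j ω - ∑ i, X i ω * W₀ i j) 2 ℙ := by
      apply MemLp.sub (hL j)
      have hrw : (fun ω => ∑ i, X i ω * W₀ i j)
          = ∑ i : Fin p, (fun ω => W₀ i j * X i ω) := by
        ext ω
        rw [Finset.sum_apply]
        exact Finset.sum_congr rfl fun i _ => mul_comm _ _
      rw [hrw]
      exact memLp_finset_sum' _ fun i _ => (hL i).const_mul _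
    have hv := hvar j
    rw [variance_eq_sub hmem] at hv
    have hm : (∫ ω, (X j ω - ∑ i, X i ω * W₀ i j)) = 0 := hmean j
    simp only [Pi.pow_apply] at hv
    rw [hm] at hv
    simpa [he] using hv
  have hsW₀ : ∀ Om : Fin p → ℝ, s Om W₀ = ∑ j, (1 / Om j) * Ω₀ j := by
    intro Om
    rw [hs]
    refine Finset.sum_congr rfl fun j _ => ?_
    rw [show (∫ ω, (X j ω - ∑ i, X i ω * W₀ i j) ^ 2) = e W₀ j from rfl, heW₀ j]
  have hsval : ∀ Om W, s Om W = ∑ j, (1 / Om j) * e W j := hs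
  have hsnonneg : ∀ W, 0 ≤ s Ω₀ W := by
    intro W
    rw [hsval]
    refine Finset.sum_nonneg fun j _ => mul_nonneg ?_ (he0 W j)
    have := hΩ₀pos j
    positivity
  have hsΩ₀W₀ : s Ω₀ W₀ = p := by
    rw [hsW₀]
    have h1 : ∀ j : Fin p, (1 / Ω₀ j) * Ω₀ j = 1 := fun j =>
      one_div_mul_cancel (ne_of_gt (hΩ₀pos j))
    rw [Finset.sum_congr rfl fun j _ => h1 j]
    simp
  have hbdd : BddBelow ((fun W => s Ω₀ W - s Ω₀ W₀) '' {W | W ∈ Dset ∧ W ≠ W₀}) := by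
    refine ⟨-s Ω₀ W₀, ?_⟩
    rintro x ⟨W, hW, rfl⟩
    have := hsnonneg W
    simp only
    linarith
  have hξle : ∀ W, W ∈ Dset → W ≠ W₀ → ξ ≤ s Ω₀ W - s Ω₀ W₀ := by
    intro W hW hne
    rw [hξ]
    exact csInf_le hbdd ⟨W, ⟨hW, hne⟩, rfl⟩
  -- key lower bound
  have hkey : ∀ W, W ∈ Dset → W ≠ W₀ →
      amin * ξ - (amax - amin) * p ≤ s Ω₁ W - s Ω₁ W₀ := by
    intro W hW hne
    set d : Fin p → ℝ := fun j => e W j / Ω₀ j - 1 with hd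
    have hdge : ∀ j, -1 ≤ d j := by
      intro j
      have h1 : 0 ≤ e W j / Ω₀ j := div_nonneg (he0 W j) (hΩ₀pos j).le
      show -1 ≤ e W j / Ω₀ j - 1
      linarith
    have hdiff1 : s Ω₁ W - s Ω₁ W₀ = ∑ j, a j * d j := by
      rw [hsval, hsW₀, ← Finset.sum_sub_distrib]
      refine Finset.sum_congr rfl fun j _ => ?_
      have h0 : Ω₀ j ≠ 0 := ne_of_gt (hΩ₀pos j)
      have h1 : Ω₁ j ≠ 0 := ne_of_gt (hΩ₁pos j)
      simp only [ha, hd]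
      field_simp
    have hdiff0 : s Ω₀ W - s Ω₀ W₀ = ∑ j, d j := by
      rw [hsval, hsW₀, ← Finset.sum_sub_distrib]
      refine Finset.sum_congr rfl fun j _ => ?_
      have h0 : Ω₀ j ≠ 0 := ne_of_gt (hΩ₀pos j)
      simp only [hd]
      field_simp
    have hsumd : ξ ≤ ∑ j, d j := by
      rw [← hdiff0]; exact hξle W hW hne
    have hpt : ∀ j ∈ Finset.univ, amin * d j - (amax - amin) ≤ a j * d j := by
      intro j _
      have h1 := hlea j
      have h2 := hale j
      have h3 := hdge j
      nlinarith [mul_nonneg (sub_nonneg.2 h1) (by linarith : (0:ℝ) ≤ d j + 1)]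
    have hsum : ∑ j, (amin * d j - (amax - amin)) ≤ ∑ j, a j * d j :=
      Finset.sum_le_sum hpt
    have hrw : ∑ j : Fin p, (amin * d j - (amax - amin))
        = amin * (∑ j, d j) - (amax - amin) * p := by
      rw [Finset.sum_sub_distrib, ← Finset.mul_sum, Finset.sum_const,
        Finset.card_univ, Fintype.card_fin, nsmul_eq_mul]
      ring
    have hmul : amin * ξ ≤ amin * (∑ j, d j) :=
      mul_le_mul_of_nonneg_left hsumd haminpos.le
    rw [hdiff1]
    calc amin * ξ - (amax - amin) * p
        ≤ amin * (∑ j, d j) - (amax - amin) * p := by linarith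
      _ = ∑ j : Fin p, (amin * d j - (amax - amin)) := hrw.symm
      _ ≤ ∑ j, a j * d j := hsum
  refine ⟨?_, ?_⟩
  · intro h W hW
    by_cases hne : W = W₀
    · subst hne; exact le_refl _
    · have h1 := hkey W hW hne
      rw [div_le_iff₀ haminpos] at h
      have h2 : (1 + ξ / p) * amin * p = amin * p + amin * ξ := by
        field_simp
      nlinarith
  · intro h W hW hne
    have h1 := hkey W hW hne
    rw [div_lt_iff₀ haminpos] at h
    have h2 : (1 + ξ / p) * amin * p = amin * p + amin * ξ := by
      field_simp
    nlinarith
end
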